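/- Let G be a finite DAG, let U be a subset of its roots, and let G' be the n-world model of G sharing U. If G has an elimination order π with width w (on the moral graph of G), then the corresponding elimination order π' for G' has width w' ≤ n(w + 1) − 1 (on the moral graph of G'). -/

import Mathlib

/-! Preliminaries: vertex elimination, elimination orders, clusters, width,
moral graphs of DAGs. -/

variable {V : Type*}

/-- Eliminating a vertex `v` from a simple graph: connect every pair of neighbors of `v`,
then delete `v` (here: make `v` isolated, keeping the vertex type). -/
def elimVertex (G : SimpleGraph V) (v : V) : SimpleGraph V where
  Adj x y := x ≠ y ∧ x ≠ v ∧ y ≠ v ∧ (G.Adj x y ∨ (G.Adj x v ∧ G.Adj y v))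
  symm := by
    refine ⟨?_⟩
    rintro x y ⟨hxy, hxv, hyv, h⟩
    exact ⟨hxy.symm, hyv, hxv, h.imp (fun a => a.symm) And.symm⟩
  loopless := by refine ⟨?_⟩; rintro x ⟨h, -⟩; exact h rfl

/-- Eliminating a list of vertices successively. -/
def elimList (G : SimpleGraph V) (l : List V) : SimpleGraph V := l.foldl elimVertex G

/-- The cluster of the `i`-th vertex of an elimination order `π`: the vertex together
with its neighbors in the graph just before it is eliminated. -/
def cluster (G : SimpleGraph V) (π : List V) (i : Fin π.length) : Set V :=
  insert (π.get i) ((elimList G (π.take i)).neighborSet (π.get i))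

/-- The width of an elimination order: the size of its largest cluster minus one. -/
noncomputable def orderWidth (G : SimpleGraph V) (π : List V) : ℕ :=
  (Finset.univ.sup fun i : Fin π.length => (cluster G π i).ncard) - 1

/-- An elimination order for a graph on `V`: a list of all vertices without duplicates. -/
def IsElimOrder (π : List V) : Prop := π.Nodup ∧ ∀ v : V, v ∈ π

/-- A `U`-constrained elimination order: the vertices of `U` appear last. -/
def IsUConstrained (U : Set V) (π : List V) : Prop :=
  ∃ l₁ l₂, π = l₁ ++ l₂ ∧ (∀ v ∈ l₁, v ∉ U) ∧ (∀ v ∈ l₂, v ∈ U)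

/-- Acyclicity of a directed graph given by an edge (parent) relation `E`. -/
def IsAcyclicDigraph (E : V → V → Prop) : Prop := ∀ v, ¬ Relation.TransGen E v v

/-- A root of a DAG: a vertex with no parents. -/
def IsRoot (E : V → V → Prop) (v : V) : Prop := ∀ u, ¬ E u v

/-- The moral graph of a DAG: edge between distinct vertices iff one is a parent of
the other or they have a common child. -/
def MoralGraph (E : V → V → Prop) : SimpleGraph V where
  Adj x y := x ≠ y ∧ (E x y ∨ E y x ∨ ∃ z, E x z ∧ E y z)
  symm := by
    refine ⟨?_⟩
    rintro x y ⟨hxy, h⟩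
    exact ⟨hxy.symm, by tauto⟩
  loopless := by refine ⟨?_⟩; rintro x ⟨h, -⟩; exact h rfl

/-! The `n`-world model of a DAG sharing a set `U` of its roots. -/

/-- Vertices of the `n`-world model of a DAG on `V` sharing the roots `U`:
vertices in `U` are shared; every other vertex has `n` duplicates. -/
def WVertex (U : Set V) (n : ℕ) : Type _ := ↥U ⊕ (↥Uᶜ × Fin n)

/-- The copy of vertex `v` in world `k` (vertices in `U` are shared). -/
def worldCopy (U : Set V) [DecidablePred (· ∈ U)] (n : ℕ) (k : Fin n) (v : V) :
    WVertex U n :=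
  if h : v ∈ U then Sum.inl ⟨v, h⟩ else Sum.inr (⟨v, h⟩, k)

/-- Edge relation of the `n`-world model: each edge of the DAG is duplicated in each
copy. -/
def nWorldE (E : V → V → Prop) (U : Set V) [DecidablePred (· ∈ U)] (n : ℕ) :
    WVertex U n → WVertex U n → Prop :=
  fun a b => ∃ (x y : V) (k : Fin n),
    E x y ∧ a = worldCopy U n k x ∧ b = worldCopy U n k y

/-- The elimination order for the `n`-world model corresponding to an order `π`:
replace each non-`U` vertex by its `n` duplicates (consecutively). -/
def liftOrder (U : Set V) [DecidablePred (· ∈ U)] (n : ℕ) (π : List V) :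
    List (WVertex U n) :=
  π.flatMap fun v =>
    if h : v ∈ U then [Sum.inl ⟨v, h⟩]
    else (List.finRange n).map fun k => Sum.inr (⟨v, h⟩, k)


/-! ### Auxiliary development for Statement 4 -/

section Aux

variable {V : Type*} (U : Set V) [DecidablePred (· ∈ U)] (n : ℕ)

/-- Projection from the `n`-world vertex type back to `V`. -/
def projW : WVertex U n → V := fun a =>
  match a with
  | Sum.inl u => u.1
  | Sum.inr p => p.1.1

@[simp] lemma projW_worldCopy (k : Fin n) (v : V) :
    projW U n (worldCopy U n k v) = v := by
  unfold worldCopy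
  by_cases h : v ∈ U <;> simp [h] <;> rfl

instance [Finite V] : Finite (WVertex U n) := by
  unfold WVertex
  infer_instance

variable {U n}

lemma fiber_ncard_le [Finite V] (hn : 0 < n) (C : Set V) :
    (projW U n ⁻¹' C).ncard ≤ n * C.ncard := by
  classical
  have key : Nat.card (projW U n ⁻¹' C) ≤ Nat.card (↥C × Fin n) := by
    apply Nat.card_le_card_of_surjective
      (f := fun p : ↥C × Fin n =>
        (⟨worldCopy U n p.2 p.1.1, by simp [p.1.2]⟩ : ↥(projW U n ⁻¹' C)))
    rintro ⟨a, ha⟩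
    cases a with
    | inl u =>
      refine ⟨(⟨u.1, ha⟩, ⟨0, hn⟩), ?_⟩
      exact Subtype.ext (dif_pos u.2)
    | inr p =>
      refine ⟨(⟨p.1.1, ha⟩, p.2), ?_⟩
      exact Subtype.ext (dif_neg p.1.2)
  have h2 : Nat.card (Fin n) = n := by simp
  rw [Nat.card_prod, h2, Nat.card_coe_set_eq, Nat.card_coe_set_eq] at key
  rw [mul_comm]
  exact key

/-- Invariant: adjacency upstairs projects to adjacency or equality downstairs. -/
def InvI (H' : SimpleGraph (WVertex U n)) (H : SimpleGraph V) : Prop :=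
  ∀ a b, H'.Adj a b → H.Adj (projW U n a) (projW U n b) ∨ projW U n a = projW U n b

/-- Intermediate invariant while eliminating the copies of `X`. -/
def InvX (H : SimpleGraph V) (X : V) (K : SimpleGraph (WVertex U n)) : Prop :=
  ∀ a b, K.Adj a b → H.Adj (projW U n a) (projW U n b) ∨ projW U n a = projW U n b ∨
    (projW U n a ∈ insert X (H.neighborSet X) ∧ projW U n b ∈ insert X (H.neighborSet X))

omit [DecidablePred fun x => x ∈ U] in
lemma invX_of_invI {H' : SimpleGraph (WVertex U n)} {H : SimpleGraph V}
    (h : InvI H' H) (X : V) : InvX H X H' := by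
  intro a b hab
  rcases h a b hab with h1 | h1
  · exact Or.inl h1
  · exact Or.inr (Or.inl h1)

omit [DecidablePred fun x => x ∈ U] in
lemma invX_elimVertex {H : SimpleGraph V} {X : V} {K : SimpleGraph (WVertex U n)}
    (h : InvX H X K) {v : WVertex U n} (hv : projW U n v = X) :
    InvX H X (elimVertex K v) := by
  rintro a b ⟨hab, hav, hbv, hadj | ⟨ha, hb⟩⟩
  · exact h a b hadj
  · refine Or.inr (Or.inr ⟨?_, ?_⟩)
    · rcases h a v ha with h1 | h1 | h1
      · rw [hv] at h1; exact Or.inr h1.symm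
      · rw [hv] at h1; exact Or.inl h1
      · exact h1.1
    · rcases h b v hb with h1 | h1 | h1
      · rw [hv] at h1; exact Or.inr h1.symm
      · rw [hv] at h1; exact Or.inl h1
      · exact h1.1

omit [DecidablePred fun x => x ∈ U] in
lemma invX_elimList {H : SimpleGraph V} {X : V} {K : SimpleGraph (WVertex U n)}
    (h : InvX H X K) {l : List (WVertex U n)} (hl : ∀ c ∈ l, projW U n c = X) :
    InvX H X (elimList K l) := by
  induction l generalizing K with
  | nil => exact h
  | cons c t ih =>
    exact ih (invX_elimVertex h (hl c List.mem_cons_self))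
      (fun x hx => hl x (List.mem_cons_of_mem _ hx))

omit [DecidablePred fun x => x ∈ U] in
lemma neighbor_proj_mem {H : SimpleGraph V} {X : V} {K : SimpleGraph (WVertex U n)}
    (h : InvX H X K) {v a : WVertex U n} (hv : projW U n v = X) (ha : K.Adj v a) :
    projW U n a ∈ insert X (H.neighborSet X) := by
  rcases h v a ha with h1 | h1 | h1
  · rw [hv] at h1; exact Or.inr h1
  · rw [hv] at h1; exact Or.inl h1.symm
  · exact h1.2

lemma isolated_elimVertex {W : Type*} {K : SimpleGraph W} {v : W}
    (hv : ∀ b, ¬ K.Adj v b) (u : W) : ∀ b, ¬ (elimVertex K u).Adj v b := by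
  rintro b ⟨-, -, -, h | ⟨h, -⟩⟩
  · exact hv b h
  · exact hv u h

lemma isolated_elimVertex_self {W : Type*} (K : SimpleGraph W) (v : W) :
    ∀ b, ¬ (elimVertex K v).Adj v b := by
  rintro b ⟨-, h, -, -⟩
  exact h rfl

lemma isolated_elimList {W : Type*} {K : SimpleGraph W} {v : W}
    (hv : ∀ b, ¬ K.Adj v b) (l : List W) : ∀ b, ¬ (elimList K l).Adj v b := by
  induction l generalizing K with
  | nil => exact hv
  | cons c t ih => exact ih (isolated_elimVertex hv c)

lemma mem_isolated_elimList {W : Type*} (K : SimpleGraph W) {v : W} {l : List W}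
    (hv : v ∈ l) : ∀ b, ¬ (elimList K l).Adj v b := by
  induction l generalizing K with
  | nil => cases hv
  | cons c t ih =>
    rcases List.mem_cons.1 hv with rfl | hv
    · exact isolated_elimList (isolated_elimVertex_self K v) t
    · exact ih _ hv

omit [DecidablePred fun x => x ∈ U] in
lemma invI_step {H : SimpleGraph V} {X : V} {K : SimpleGraph (WVertex U n)}
    (h : InvX H X K) (hiso : ∀ a, projW U n a = X → ∀ b, ¬ K.Adj a b) :
    InvI K (elimVertex H X) := by
  intro a b hab
  have haX : projW U n a ≠ X := fun hx => hiso a hx b hab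
  have hbX : projW U n b ≠ X := fun hx => hiso b hx a hab.symm
  rcases h a b hab with h1 | h1 | h1
  · by_cases hpq : projW U n a = projW U n b
    · exact Or.inr hpq
    · exact Or.inl ⟨hpq, haX, hbX, Or.inl h1⟩
  · exact Or.inr h1
  · by_cases hpq : projW U n a = projW U n b
    · exact Or.inr hpq
    · rcases h1 with ⟨ha, hb⟩
      rcases ha with ha | ha
      · exact absurd ha haX
      rcases hb with hb | hb
      · exact absurd hb hbX
      exact Or.inl ⟨hpq, haX, hbX, Or.inr ⟨ha.symm, hb.symm⟩⟩

/-- The block of copies of a vertex in the lifted order. -/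
def blk (U : Set V) [DecidablePred (· ∈ U)] (n : ℕ) (v : V) : List (WVertex U n) :=
  if h : v ∈ U then [Sum.inl ⟨v, h⟩]
  else (List.finRange n).map fun k => Sum.inr (⟨v, h⟩, k)

lemma liftOrder_cons (X : V) (t : List V) :
    liftOrder U n (X :: t) = blk U n X ++ liftOrder U n t := by
  simp [liftOrder, blk]

lemma blk_proj (X : V) : ∀ c ∈ blk U n X, projW U n c = X := by
  intro c hc
  unfold blk at hc
  split at hc
  · have hc' := List.eq_of_mem_singleton hc; subst hc'; rfl
  · rcases List.mem_map.1 hc with ⟨k, -, rfl⟩; rfl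

lemma blk_fiber (X : V) {a : WVertex U n} (ha : projW U n a = X) : a ∈ blk U n X := by
  unfold blk
  cases a with
  | inl u =>
    have hXU : X ∈ U := ha ▸ u.2
    rw [dif_pos hXU]
    have : u = ⟨X, hXU⟩ := Subtype.ext ha
    simp [this]
    exact List.mem_singleton_self _
  | inr p =>
    have hXU : X ∉ U := ha ▸ p.1.2
    rw [dif_neg hXU]
    refine List.mem_map.2 ⟨p.2, List.mem_finRange _, ?_⟩
    have : p.1 = ⟨X, hXU⟩ := Subtype.ext ha
    rw [← this]

lemma invI_elim_blk {H' : SimpleGraph (WVertex U n)} {H : SimpleGraph V}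
    (h : InvI H' H) (X : V) : InvI (elimList H' (blk U n X)) (elimVertex H X) := by
  apply invI_step (invX_elimList (invX_of_invI h X) (blk_proj X))
  intro a ha b
  exact mem_isolated_elimList H' (blk_fiber X ha) b

omit [DecidablePred fun x => x ∈ U] in
lemma cluster_tail_eq (H : SimpleGraph V) (X : V) (t : List V) (j : Fin t.length) :
    cluster (elimVertex H X) t j =
      cluster H (X :: t) (Fin.mk (j.1 + 1) (by simp [j.2])) := rfl

/-- Main induction: every cluster of the lifted order is bounded by `n` times the
largest cluster of the original order. -/
lemma main_bound [Finite V] (hn : 0 < n) :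
    ∀ (π : List V) (H : SimpleGraph V) (H' : SimpleGraph (WVertex U n)),
      InvI H' H → ∀ i : Fin (liftOrder U n π).length,
        (cluster H' (liftOrder U n π) i).ncard ≤
          n * (Finset.univ.sup fun j : Fin π.length => (cluster H π j).ncard) := by
  intro π
  induction π with
  | nil =>
    intro H H' hI i
    exact absurd i.2 (by simp [liftOrder])
  | cons X t ih =>
    intro H H' hI
    rw [liftOrder_cons]
    intro i
    obtain ⟨iv, hlt⟩ := i
    by_cases hi : iv < (blk U n X).length
    · -- inside the block of `X`
      have htake : (blk U n X ++ liftOrder U n t).take iv = (blk U n X).take iv := by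
        rw [List.take_append, Nat.sub_eq_zero_of_le (le_of_lt hi),
          List.take_zero, List.append_nil]
      have hget : (blk U n X ++ liftOrder U n t).get ⟨iv, hlt⟩ =
          (blk U n X)[iv]'hi := by
        simp only [List.get_eq_getElem]
        exact List.getElem_append_left hi
      have hvproj : projW U n ((blk U n X ++ liftOrder U n t).get ⟨iv, hlt⟩) = X := by
        rw [hget]
        exact blk_proj X _ (List.getElem_mem hi)
      have hInvX : InvX H X (elimList H' ((blk U n X ++ liftOrder U n t).take iv)) := by
        rw [htake]
        exact invX_elimList (invX_of_invI hI X)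
          (fun c hc => blk_proj X c (List.mem_of_mem_take hc))
      have hC : cluster H' (blk U n X ++ liftOrder U n t) ⟨iv, hlt⟩ ⊆
          projW U n ⁻¹' (insert X (H.neighborSet X)) := by
        intro a ha
        unfold cluster at ha
        rcases Set.mem_insert_iff.1 ha with rfl | ha
        · refine Set.mem_preimage.2 ?_
          rw [hvproj]
          exact Set.mem_insert _ _
        · exact neighbor_proj_mem hInvX hvproj ha
      calc (cluster H' (blk U n X ++ liftOrder U n t) ⟨iv, hlt⟩).ncard
          ≤ (projW U n ⁻¹' (insert X (H.neighborSet X))).ncard :=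
            Set.ncard_le_ncard hC (Set.toFinite _)
        _ ≤ n * (insert X (H.neighborSet X)).ncard := fiber_ncard_le hn _
        _ ≤ n * (Finset.univ.sup fun j : Fin (X :: t).length =>
              (cluster H (X :: t) j).ncard) := by
            apply Nat.mul_le_mul_left
            have h0 : (0 : ℕ) < (X :: t).length := by simp
            have hcl : cluster H (X :: t) ⟨0, h0⟩ = insert X (H.neighborSet X) := rfl
            rw [← hcl]
            exact Finset.le_sup (f := fun j : Fin (X :: t).length =>
              (cluster H (X :: t) j).ncard) (Finset.mem_univ _)
    · -- inside the tail
      push_neg at hi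
      have hlenL : iv - (blk U n X).length < (liftOrder U n t).length := by
        have h2 := hlt
        rw [List.length_append] at h2
        omega
      have htake : (blk U n X ++ liftOrder U n t).take iv =
          blk U n X ++ (liftOrder U n t).take (iv - (blk U n X).length) := by
        rw [List.take_append, List.take_of_length_le hi]
      have hget : (blk U n X ++ liftOrder U n t).get ⟨iv, hlt⟩ =
          (liftOrder U n t).get ⟨iv - (blk U n X).length, hlenL⟩ := by
        simp only [List.get_eq_getElem]
        exact List.getElem_append_right hi
      have hclus : cluster H' (blk U n X ++ liftOrder U n t) ⟨iv, hlt⟩ =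
          cluster (elimList H' (blk U n X)) (liftOrder U n t)
            ⟨iv - (blk U n X).length, hlenL⟩ := by
        unfold cluster elimList
        rw [hget, htake, List.foldl_append]
      rw [hclus]
      refine (ih (elimVertex H X) (elimList H' (blk U n X)) (invI_elim_blk hI X)
        ⟨iv - (blk U n X).length, hlenL⟩).trans (Nat.mul_le_mul_left _ ?_)
      apply Finset.sup_le
      intro j _
      rw [cluster_tail_eq]
      exact Finset.le_sup (f := fun j : Fin (X :: t).length =>
        (cluster H (X :: t) j).ncard) (Finset.mem_univ _)

end Aux

/-- Let `G` be a finite DAG (edge relation `E` on `V`), `U` a subset of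
its roots, and `G'` the `n`-world model of `G` sharing `U`. If `G` has an elimination
order `π` with width `w` (on its moral graph), then the corresponding elimination order
`π'` for `G'` has width `w' ≤ n(w + 1) − 1` (on the moral graph of `G'`). -/
theorem stmt4 {V : Type*} [Fintype V] (E : V → V → Prop)
    (hdag : IsAcyclicDigraph E)
    (U : Set V) [DecidablePred (· ∈ U)] (hU : ∀ u ∈ U, IsRoot E u)
    (n : ℕ) (hn : 0 < n)
    (π : List V) (hπ : IsElimOrder π) (w : ℕ)
    (hw : orderWidth (MoralGraph E) π = w) :
    orderWidth (MoralGraph (nWorldE E U n)) (liftOrder U n π) ≤ n * (w + 1) - 1 := by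
  classical
  have hsup : (Finset.univ.sup fun i : Fin π.length =>
      (cluster (MoralGraph E) π i).ncard) ≤ w + 1 := by
    have h := hw
    unfold orderWidth at h
    omega
  have hbase : InvI (MoralGraph (nWorldE E U n)) (MoralGraph E) := by
    rintro a b ⟨hab, h⟩
    by_cases hpq : projW U n a = projW U n b
    · exact Or.inr hpq
    refine Or.inl ⟨hpq, ?_⟩
    rcases h with ⟨x, y, k, hxy, rfl, rfl⟩ | ⟨x, y, k, hxy, rfl, rfl⟩ |
      ⟨c, ⟨x, z, k, hxz, rfl, hc⟩, ⟨y, z', k', hyz, rfl, hc'⟩⟩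
    · simp only [projW_worldCopy]
      exact Or.inl hxy
    · simp only [projW_worldCopy]
      exact Or.inr (Or.inl hxy)
    · simp only [projW_worldCopy]
      have hzz : z = z' := by
        rw [hc] at hc'
        simpa using congrArg (projW U n) hc'
      refine Or.inr (Or.inr ⟨z, hxz, ?_⟩)
      rw [hzz]
      exact hyz
  have hmain := main_bound (U := U) hn π (MoralGraph E) (MoralGraph (nWorldE E U n)) hbase
  have hs : (Finset.univ.sup fun i : Fin (liftOrder U n π).length =>
      (cluster (MoralGraph (nWorldE E U n)) (liftOrder U n π) i).ncard) ≤ n * (w + 1) := by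
    apply Finset.sup_le
    intro i _
    exact (hmain i).trans (Nat.mul_le_mul_left _ hsup)
  unfold orderWidth
  exact Nat.sub_le_sub_right hs 1
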